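/- arXiv:0803.1135 — 3 statements merged into one kernel-verified Lean document; each statement's English description precedes it below -/
import Mathlib

section
/- Let A be a local Artinian k-algebra with maximal ideal M, residue field k, and dim_k(M²/M³) = 2, with char(k) ≠ 2. If a₁,…,aₙ generate M and a₁a₂ ∈ M² \ M³, then for some choice of linear combinations b₁, b₂ of the aᵢ one has M² = (b₁², b₂²) + M³ with b₁², b₂² linearly independent modulo M³. -/
/-!
By polarization, `x * y = 2⁻¹ • ((x + y) ^ 2 - x ^ 2 - y ^ 2)`, so products of `k`-linear
combinations of the `aᵢ` are `k`-linear combinations of squares of such combinations. Since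
`A = k + M`, the space `M² / M³` is spanned over `k` by the products `aᵢ aⱼ`, hence by squares
`b ^ 2` with `b` in the `k`-span of the `aᵢ`; as it has dimension `2`, two of these squares
form a basis of it.
-/

open IsLocalRing Submodule Module

/-- `dim_k (M^i / M^{i+1})`. -/
noncomputable def hilbFn (k : Type*) {A : Type*} [Field k] [CommRing A] [Algebra k A]
    (M : Ideal A) (i : ℕ) : ℕ :=
  Module.finrank k
    ((Submodule.restrictScalars k (M ^ i)) ⧸
      (Submodule.comap (Submodule.restrictScalars k (M ^ i)).subtype
        (Submodule.restrictScalars k (M ^ (i + 1)))))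

open scoped Pointwise

theorem mul_mem_span_image_sq {k R : Type*} [Field k] [CommRing R] [Algebra k R]
    (hchar : (2 : k) ≠ 0) {V : Submodule k R} {x y : R} (hx : x ∈ V) (hy : y ∈ V) :
    x * y ∈ span k ((· ^ 2) '' (V : Set R)) := by
  have hsq : ∀ z ∈ V, z ^ 2 ∈ span k ((· ^ 2) '' (V : Set R)) := fun z hz =>
    subset_span ⟨z, hz, rfl⟩
  have hpol : x * y = (2⁻¹ : k) • ((x + y) ^ 2 - x ^ 2 - y ^ 2) := by
    rw [show (x + y) ^ 2 - x ^ 2 - y ^ 2 = (2 : k) • (x * y) by rw [ofNat_smul_eq_nsmul]; ring,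
      smul_smul, inv_mul_cancel₀ hchar, one_smul]
  rw [hpol]
  exact smul_mem _ _ (sub_mem (sub_mem (hsq _ (add_mem hx hy)) (hsq x hx)) (hsq y hy))

theorem Ideal.restrictScalars_span_le_span_sup_mul {k R : Type*} [CommSemiring k] [CommRing R]
    [Algebra k R] {I : Ideal R} (hI : ∀ r : R, ∃ c : k, r - algebraMap k R c ∈ I) (u : Set R) :
    (Ideal.span u).restrictScalars k ≤
      Submodule.span k u ⊔ (I * Ideal.span u).restrictScalars k := by
  intro x hx
  rw [restrictScalars_mem] at hx
  induction hx using Submodule.span_induction with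
  | mem y hy => exact Submodule.mem_sup_left (Submodule.subset_span hy)
  | zero => exact zero_mem _
  | add y z _ _ hy hz => exact add_mem hy hz
  | smul r y hy hy' =>
    obtain ⟨c, hc⟩ := hI r
    have hsplit : r • y = c • y + (r - algebraMap k R c) * y := by
      rw [smul_eq_mul, Algebra.smul_def]; ring
    rw [hsplit]
    refine add_mem (smul_mem _ c hy') (Submodule.mem_sup_right ?_)
    exact Ideal.mul_mem_mul hc hy

theorem IsLocalRing.exists_sub_algebraMap_mem_maximalIdeal {k A : Type*} [CommRing k]
    [CommRing A] [Algebra k A] [IsLocalRing A]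
    (hres : Function.Surjective (algebraMap k (ResidueField A))) (r : A) :
    ∃ c : k, r - algebraMap k A c ∈ maximalIdeal A := by
  obtain ⟨c, hc⟩ := hres (residue A r)
  refine ⟨c, (residue_eq_zero_iff _).mp ?_⟩
  rw [map_sub, ← hc, IsScalarTower.algebraMap_apply k A (ResidueField A),
    ResidueField.algebraMap_eq, sub_self]

theorem LinearMap.finrank_map_eq_finrank_quotient_ker {k E F : Type*} [Ring k] [AddCommGroup E]
    [Module k E] [AddCommGroup F] [Module k F] (f : E →ₗ[k] F) (P : Submodule k E) :
    finrank k (P.map f) = finrank k (P ⧸ comap P.subtype (LinearMap.ker f)) := by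
  rw [← LinearMap.ker_domRestrict, ← LinearMap.range_domRestrict]
  exact (f.domRestrict P).quotKerEquivRange.finrank_eq.symm

theorem Submodule.map_eq_span_image_of_le_span_sup_ker {k E F : Type*} [Ring k]
    [AddCommGroup E] [Module k E] [AddCommGroup F] [Module k F] {f : E →ₗ[k] F}
    {P : Submodule k E} {S : Set E} (hSP : S ⊆ P) (hPS : P ≤ span k S ⊔ LinearMap.ker f) :
    P.map f = span k (f '' S) := by
  rw [← map_span]
  refine le_antisymm ?_ (map_mono (span_le.mpr hSP))
  calc P.map f ≤ (span k S ⊔ LinearMap.ker f).map f := map_mono hPS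
    _ = (span k S).map f := by
      rw [map_sup, sup_eq_left]
      exact map_le_iff_le_comap.mpr (comap_mono bot_le)

theorem exists_linearIndependent_pair_of_finrank_span_eq_two {k F : Type*} [Field k]
    [AddCommGroup F] [Module k F] {S : Set F} (hS : finrank k (span k S) = 2) :
    ∃ x ∈ S, ∃ y ∈ S, LinearIndependent k ![x, y] ∧ span k {x, y} = span k S := by
  have : FiniteDimensional k (span k S) := .of_finrank_pos (by omega)
  obtain ⟨x, hxS, hx⟩ : ∃ x ∈ S, x ≠ 0 := by
    by_contra! h
    rw [span_eq_bot.mpr h, finrank_bot] at hS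
    omega
  obtain ⟨y, hyS, hy⟩ : ∃ y ∈ S, y ∉ span k {x} := by
    by_contra! h
    have := finrank_mono (span_le.mpr h)
    rw [hS, finrank_span_singleton hx] at this
    omega
  have hli : LinearIndependent k ![x, y] := (LinearIndependent.pair_iff' hx).mpr
    fun a hxy => hy (hxy ▸ smul_mem _ a (mem_span_singleton_self x))
  refine ⟨x, hxS, y, hyS, hli, eq_of_le_of_finrank_le (span_le.mpr ?_) ?_⟩
  · exact Set.insert_subset (subset_span hxS) (Set.singleton_subset_iff.mpr (subset_span hyS))
  · rw [hS, ← Matrix.range_cons_cons_empty x y ![], finrank_span_eq_card hli, Fintype.card_fin]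

theorem Ideal.eq_span_sup_of_map_le_span {k A : Type*} [CommSemiring k] [CommRing A]
    [Algebra k A] {I J : Ideal A} {s : Set A} (hs : s ⊆ I) (hJI : J ≤ I)
    (hmap : (I.restrictScalars k).map (Ideal.Quotient.mkₐ k J).toLinearMap ≤
      Submodule.span k (Ideal.Quotient.mk J '' s)) :
    I = Ideal.span s ⊔ J := by
  refine le_antisymm ?_ (sup_le (Ideal.span_le.mpr hs) hJI)
  set f := (Ideal.Quotient.mkₐ k J).toLinearMap
  have hker : LinearMap.ker f = J.restrictScalars k := by
    ext; simp [f, Ideal.Quotient.eq_zero_iff_mem]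
  rw [← restrictScalars_le k]
  calc I.restrictScalars k ≤ ((I.restrictScalars k).map f).comap f :=
        Submodule.le_comap_map _ _
    _ ≤ ((Submodule.span k s).map f).comap f :=
      Submodule.comap_mono (hmap.trans (Submodule.map_span f s).ge)
    _ = Submodule.span k s ⊔ J.restrictScalars k := by rw [Submodule.comap_map_eq, hker]
    _ ≤ _ := sup_le ((span_le_restrictScalars k A s).trans (restrictScalars_mono k le_sup_left))
      (restrictScalars_mono k le_sup_right)

theorem stmt5 (k A : Type*) [Field k] (hchar : (2 : k) ≠ 0)
    [CommRing A] [Algebra k A] [IsLocalRing A]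
    (hres : Function.Bijective (algebraMap k (IsLocalRing.ResidueField A)))
    (hH2 : hilbFn k (IsLocalRing.maximalIdeal A) 2 = 2)
    (n : ℕ) (a : Fin n → A)
    (hgen : Ideal.span (Set.range a) = IsLocalRing.maximalIdeal A) :
    ∃ c e : Fin n → k,
      (IsLocalRing.maximalIdeal A ^ 2 =
        Ideal.span {(∑ i, c i • a i) ^ 2, (∑ i, e i • a i) ^ 2} ⊔
          IsLocalRing.maximalIdeal A ^ 3) ∧
      LinearIndependent k
        ![Ideal.Quotient.mk (IsLocalRing.maximalIdeal A ^ 3) ((∑ i, c i • a i) ^ 2),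
          Ideal.Quotient.mk (IsLocalRing.maximalIdeal A ^ 3) ((∑ i, e i • a i) ^ 2)] := by
  set M := maximalIdeal A
  set f := (Ideal.Quotient.mkₐ k (M ^ 3)).toLinearMap
  set S := (· ^ 2) '' (span k (Set.range a) : Set A)
  have hker : LinearMap.ker f = (M ^ 3).restrictScalars k := by
    ext; simp [f, Ideal.Quotient.eq_zero_iff_mem]
  have hSM2 : S ⊆ (M ^ 2).restrictScalars k := by
    rintro _ ⟨b, hb, rfl⟩
    have hbM : b ∈ M := hgen ▸ span_le_restrictScalars k A (Set.range a) hb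
    exact Ideal.pow_mem_pow hbM 2
  have hM2 : (M ^ 2).restrictScalars k ≤ span k S ⊔ LinearMap.ker f := by
    have h := Ideal.restrictScalars_span_le_span_sup_mul (k := k)
      (exists_sub_algebraMap_mem_maximalIdeal hres.2) (Set.range a * Set.range a)
    rw [← Ideal.span_mul_span', hgen, ← sq, ← pow_succ'] at h
    refine h.trans (sup_le_sup (span_le.mpr ?_) hker.ge)
    rintro _ ⟨_, ⟨i, rfl⟩, _, ⟨j, rfl⟩, rfl⟩
    exact mul_mem_span_image_sq hchar (subset_span ⟨i, rfl⟩) (subset_span ⟨j, rfl⟩)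
  have hW := map_eq_span_image_of_le_span_sup_ker hSM2 hM2
  have hrank : finrank k (span k (f '' S)) = 2 := by
    rw [← hW, LinearMap.finrank_map_eq_finrank_quotient_ker, hker]
    exact hH2
  obtain ⟨_, ⟨_, ⟨b₁, hb₁, rfl⟩, rfl⟩, _, ⟨_, ⟨b₂, hb₂, rfl⟩, rfl⟩, hli, hspan⟩ :=
    exists_linearIndependent_pair_of_finrank_span_eq_two hrank
  obtain ⟨c, rfl⟩ := (mem_span_range_iff_exists_fun k).mp hb₁
  obtain ⟨e, rfl⟩ := (mem_span_range_iff_exists_fun k).mp hb₂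
  refine ⟨c, e, Ideal.eq_span_sup_of_map_le_span (k := k) ?_
    (Ideal.pow_le_pow_right (by norm_num)) ?_, hli⟩
  · exact Set.insert_subset (hSM2 ⟨_, hb₁, rfl⟩)
      (Set.singleton_subset_iff.mpr (hSM2 ⟨_, hb₂, rfl⟩))
  · rw [hW, ← hspan, Set.image_pair]
    rfl
end

section
/- Let A be a local Artinian Gorenstein k-algebra with maximal ideal M, Hilbert function (1, n, 2, 1, …, 1), level e = d−n−1 ≥ 3, and char(k) > e. Suppose a₁, a₂ ∈ M satisfy M² = (a₁², a₂²) + M³ and a₁a₂ ∈ M³. Then M^h = (a₁^h, a₂^h) + M^{h+1} for all h ≥ 2, and after possibly swapping a₁ and a₂ one has a₁^e ≠ 0 and M^h = (a₁^h) for all h ≥ 3. -/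
open IsLocalRing Submodule Module

/-- The socle `Soc(A) = (0 : M)`. -/
noncomputable def socle (A : Type*) [CommRing A] [IsLocalRing A] : Ideal A :=
  Submodule.colon (⊥ : Ideal A) (IsLocalRing.maximalIdeal A)

/-! Since `a₁ a₂ ∈ M³`, multiplying `M² = (a₁², a₂²) + M³` by `a₁^(h-1)` shows
`a₁^h M ⊆ (a₁^(h+1)) + M^(h+2)` for `h ≥ 2`, and symmetrically for `a₂`; induction on `h` gives
`M^h = (a₁^h, a₂^h) + M^(h+1)`. As `M³/M⁴` is one-dimensional, one of `a₁³, a₂³`, say `a₁³`,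
spans it, so `M³ = (a₁³) + M⁴`. The same containment propagates `M^h = (a₁^h) + M^(h+1)` to all
`h ≥ 3`, and `M^(e+1) = 0` turns this into `M^h = (a₁^h)`; in particular `a₁^e ≠ 0`. -/

namespace Ideal

variable {A : Type*} [CommRing A] {M : Ideal A} {a b : A}

theorem pow_succ_eq_mul_sup_of_pow_eq_sup {I : Ideal A} {h : ℕ} (hI : M ^ h = I ⊔ M ^ (h + 1)) :
    M ^ (h + 1) = I * M ⊔ M ^ (h + 2) := by
  rw [pow_succ, hI, sup_mul, ← pow_succ]

theorem pow_eq_span_of_pow_eq_span_sup {N h₀ : ℕ} (ha : a ∈ M) (hN : M ^ N = ⊥)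
    (hstep : ∀ h, h₀ ≤ h → M ^ h = span {a ^ h} ⊔ M ^ (h + 1)) {h : ℕ} (hh : h₀ ≤ h) :
    M ^ h = span {a ^ h} := by
  have hsup : ∀ j, M ^ h = span {a ^ h} ⊔ M ^ (h + j) := by
    intro j
    induction j with
    | zero => exact (sup_eq_right.mpr ((span_singleton_le_iff_mem _).mpr (pow_mem_pow ha h))).symm
    | succ j ih =>
      have hdvd : span {a ^ (h + j)} ≤ span {a ^ h} :=
        span_singleton_le_span_singleton.mpr (pow_dvd_pow a (Nat.le_add_right h j))
      rw [ih, hstep (h + j) (by omega), ← sup_assoc, sup_eq_left.mpr hdvd, add_assoc]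
  have hvanish : M ^ (h + N) = ⊥ := le_bot_iff.mp (hN ▸ pow_le_pow_right (Nat.le_add_left N h))
  rw [hsup N, hvanish, sup_bot_eq]

structure IsSquarePair (M : Ideal A) (a b : A) : Prop where
  left_mem : a ∈ M
  right_mem : b ∈ M
  sq_eq : M ^ 2 = span {a ^ 2, b ^ 2} ⊔ M ^ 3
  mul_mem : a * b ∈ M ^ 3

namespace IsSquarePair

theorem symm (H : IsSquarePair M a b) : IsSquarePair M b a where
  left_mem := H.right_mem
  right_mem := H.left_mem
  sq_eq := by rw [Set.pair_comm]; exact H.sq_eq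
  mul_mem := by rw [mul_comm]; exact H.mul_mem

-- `m a = x a² + y b² + z` with `z ∈ M³`; after multiplying by `a^(h+1)` the `b²` term is
-- `(y b a^h) (a b) ∈ M^(h+4)`.
theorem span_pow_mul_le (H : IsSquarePair M a b) (h : ℕ) :
    span {a ^ (h + 2)} * M ≤ span {a ^ (h + 3)} ⊔ M ^ (h + 4) := by
  rw [span_singleton_mul_le_iff]
  intro m hm
  have hma : m * a ∈ M ^ 2 := by rw [pow_two]; exact mul_mem_mul hm H.left_mem
  rw [H.sq_eq] at hma
  obtain ⟨s, hs, z, hz, hsz⟩ := Submodule.mem_sup.mp hma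
  obtain ⟨x, y, rfl⟩ := mem_span_pair.mp hs
  have hexpand : a ^ (h + 2) * m =
      x * a ^ (h + 3) + ((y * (b * a ^ h)) * (a * b) + a ^ (h + 1) * z) := by
    linear_combination -a ^ (h + 1) * hsz
  have hyb : y * (b * a ^ h) ∈ M ^ (h + 1) := by
    rw [pow_succ']
    exact mul_mem_left _ _ (mul_mem_mul H.right_mem (pow_mem_pow H.left_mem h))
  rw [hexpand]
  refine Submodule.add_mem_sup (mul_mem_left _ _ (mem_span_singleton_self _)) (add_mem ?_ ?_)
  · simpa only [← pow_add] using mul_mem_mul hyb H.mul_mem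
  · simpa only [← pow_add] using mul_mem_mul (pow_mem_pow H.left_mem (h + 1)) hz

theorem pow_eq_span_pair_sup (H : IsSquarePair M a b) {h : ℕ} (hh : 2 ≤ h) :
    M ^ h = span {a ^ h, b ^ h} ⊔ M ^ (h + 1) := by
  induction h, hh using Nat.le_induction with
  | base => exact H.sq_eq
  | succ h hh ih =>
    obtain ⟨h, rfl⟩ := Nat.exists_eq_add_of_le' hh
    refine le_antisymm ?_ (sup_le (span_le.mpr ?_) (pow_le_pow_right (by omega)))
    · have hA := H.span_pow_mul_le h
      have hB := H.symm.span_pow_mul_le h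
      calc M ^ (h + 2 + 1)
          = (span {a ^ (h + 2)} * M ⊔ span {b ^ (h + 2)} * M) ⊔ M ^ (h + 2 + 2) := by
            rw [← sup_mul, ← span_insert]; exact pow_succ_eq_mul_sup_of_pow_eq_sup ih
        _ ≤ (span {a ^ (h + 3)} ⊔ span {b ^ (h + 3)}) ⊔ M ^ (h + 4) :=
            sup_le (sup_le (hA.trans (sup_le_sup_right le_sup_left _))
              (hB.trans (sup_le_sup_right le_sup_right _))) le_sup_right
        _ = span {a ^ (h + 3), b ^ (h + 3)} ⊔ M ^ (h + 4) := by rw [span_insert]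
    · rintro _ (rfl | rfl)
      exacts [pow_mem_pow H.left_mem _, pow_mem_pow H.right_mem _]

theorem pow_succ_eq_span_sup (H : IsSquarePair M a b) {h : ℕ} (hh : 2 ≤ h)
    (hM : M ^ h = span {a ^ h} ⊔ M ^ (h + 1)) :
    M ^ (h + 1) = span {a ^ (h + 1)} ⊔ M ^ (h + 2) := by
  obtain ⟨h, rfl⟩ := Nat.exists_eq_add_of_le' hh
  refine le_antisymm ?_ (sup_le ((span_singleton_le_iff_mem _).mpr (pow_mem_pow H.left_mem _))
    (pow_le_pow_right (by omega)))
  calc M ^ (h + 2 + 1) = span {a ^ (h + 2)} * M ⊔ M ^ (h + 2 + 2) :=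
        pow_succ_eq_mul_sup_of_pow_eq_sup hM
    _ ≤ span {a ^ (h + 3)} ⊔ M ^ (h + 4) := sup_le (H.span_pow_mul_le h) le_sup_right

theorem pow_eq_span_sup_of_le (H : IsSquarePair M a b) {h₀ : ℕ} (h₀two : 2 ≤ h₀)
    (hbase : M ^ h₀ = span {a ^ h₀} ⊔ M ^ (h₀ + 1)) {h : ℕ} (hh : h₀ ≤ h) :
    M ^ h = span {a ^ h} ⊔ M ^ (h + 1) := by
  induction h, hh using Nat.le_induction with
  | base => exact hbase
  | succ h hh ih => exact H.pow_succ_eq_span_sup (h₀two.trans hh) ih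

end IsSquarePair

section HilbertFunction

variable {k : Type*} [Field k] [Algebra k A]

theorem hilbFn_eq_zero_of_pow_le {i : ℕ} (hle : M ^ i ≤ M ^ (i + 1)) : hilbFn k M i = 0 := by
  have htop : Submodule.comap (restrictScalars k (M ^ i)).subtype (restrictScalars k (M ^ (i + 1))) = ⊤ :=
    eq_top_iff'.mpr fun v => hle v.2
  have : Subsingleton (restrictScalars k (M ^ i) ⧸
      Submodule.comap (restrictScalars k (M ^ i)).subtype (restrictScalars k (M ^ (i + 1)))) :=
    Submodule.Quotient.subsingleton_iff.mpr htop
  exact finrank_zero_of_subsingleton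

theorem pow_eq_span_sup_of_hilbFn_eq_one {i : ℕ} (h1 : hilbFn k M i = 1) {x : A}
    (hx : x ∈ M ^ i) (hx' : x ∉ M ^ (i + 1)) : M ^ i = span {x} ⊔ M ^ (i + 1) := by
  set N := Submodule.comap (restrictScalars k (M ^ i)).subtype (restrictScalars k (M ^ (i + 1)))
  have hxbar : Submodule.Quotient.mk (p := N) ⟨x, hx⟩ ≠ 0 := by
    rwa [Ne, Submodule.Quotient.mk_eq_zero]
  refine le_antisymm (fun y hy => ?_)
    (sup_le ((span_singleton_le_iff_mem _).mpr hx) (pow_le_pow_right (Nat.le_succ i)))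
  obtain ⟨c, hc⟩ := (finrank_eq_one_iff_of_nonzero' _ hxbar).mp h1 (Submodule.Quotient.mk ⟨y, hy⟩)
  have hdiff : y - c • x ∈ M ^ (i + 1) := by
    have h0 : Submodule.Quotient.mk (p := N) (⟨y, hy⟩ - c • ⟨x, hx⟩) = 0 := by
      rw [Submodule.Quotient.mk_sub, Submodule.Quotient.mk_smul, hc, sub_self]
    exact (Submodule.Quotient.mk_eq_zero N).mp h0
  rw [Algebra.smul_def] at hdiff
  simpa using Submodule.add_mem_sup (mul_mem_left _ (algebraMap k A c) (mem_span_singleton_self x))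
    hdiff

theorem IsSquarePair.pow_notMem_or (H : IsSquarePair M a b) {h : ℕ} (hh : 2 ≤ h)
    (hH : hilbFn k M h ≠ 0) : a ^ h ∉ M ^ (h + 1) ∨ b ^ h ∉ M ^ (h + 1) := by
  by_contra! hmem
  refine hH (hilbFn_eq_zero_of_pow_le ?_)
  rw [H.pow_eq_span_pair_sup hh]
  refine sup_le (span_le.mpr ?_) le_rfl
  rintro _ (rfl | rfl)
  exacts [hmem.1, hmem.2]

theorem IsSquarePair.pow_eq_span_pow (H : IsSquarePair M a b) (hH3 : hilbFn k M 3 = 1)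
    (ha3 : a ^ 3 ∉ M ^ 4) {N : ℕ} (hN : M ^ N = ⊥) {h : ℕ} (hh : 3 ≤ h) :
    M ^ h = span {a ^ h} :=
  have hbase : M ^ 3 = span {a ^ 3} ⊔ M ^ 4 :=
    pow_eq_span_sup_of_hilbFn_eq_one hH3 (pow_mem_pow H.left_mem 3) ha3
  pow_eq_span_of_pow_eq_span_sup H.left_mem hN
    (fun _ hj => H.pow_eq_span_sup_of_le (by norm_num) hbase hj) hh

end HilbertFunction

end Ideal

theorem stmt8_general (k A : Type*) [Field k]
    [CommRing A] [Algebra k A] [IsLocalRing A]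
    (e : ℕ) (he : 3 ≤ e)
    (hHi : ∀ i : ℕ, 3 ≤ i → i ≤ e → hilbFn k (IsLocalRing.maximalIdeal A) i = 1)
    (hlev : IsLocalRing.maximalIdeal A ^ e ≠ ⊥)
    (hlev' : IsLocalRing.maximalIdeal A ^ (e + 1) = ⊥)
    (a₁ a₂ : A) (ha₁ : a₁ ∈ IsLocalRing.maximalIdeal A) (ha₂ : a₂ ∈ IsLocalRing.maximalIdeal A)
    (hsq : IsLocalRing.maximalIdeal A ^ 2 =
      Ideal.span {a₁ ^ 2, a₂ ^ 2} ⊔ IsLocalRing.maximalIdeal A ^ 3)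
    (hprod : a₁ * a₂ ∈ IsLocalRing.maximalIdeal A ^ 3) :
    (∀ h : ℕ, 2 ≤ h → IsLocalRing.maximalIdeal A ^ h =
      Ideal.span {a₁ ^ h, a₂ ^ h} ⊔ IsLocalRing.maximalIdeal A ^ (h + 1)) ∧
    ∃ b₁ b₂ : A, ((b₁, b₂) = (a₁, a₂) ∨ (b₁, b₂) = (a₂, a₁)) ∧
      b₁ ^ e ≠ 0 ∧
      ∀ h : ℕ, 3 ≤ h → IsLocalRing.maximalIdeal A ^ h = Ideal.span {b₁ ^ h} := by
  set M := maximalIdeal A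
  have H : Ideal.IsSquarePair M a₁ a₂ := ⟨ha₁, ha₂, hsq, hprod⟩
  have hH3 : hilbFn k M 3 = 1 := hHi 3 le_rfl he
  have hprincipal {b₁ b₂ : A} (Hb : Ideal.IsSquarePair M b₁ b₂) (hb₁ : b₁ ^ 3 ∉ M ^ 4) :
      b₁ ^ e ≠ 0 ∧ ∀ h : ℕ, 3 ≤ h → M ^ h = Ideal.span {b₁ ^ h} :=
    have hpow (h : ℕ) (hh : 3 ≤ h) := Hb.pow_eq_span_pow hH3 hb₁ hlev' hh
    ⟨fun h0 => hlev ((hpow e he).trans (Ideal.span_singleton_eq_bot.mpr h0)), hpow⟩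
  refine ⟨fun h hh => H.pow_eq_span_pair_sup hh, ?_⟩
  rcases H.pow_notMem_or (h := 3) (by norm_num) (by rw [hH3]; exact one_ne_zero) with h3 | h3
  · exact ⟨a₁, a₂, Or.inl rfl, hprincipal H h3⟩
  · exact ⟨a₂, a₁, Or.inr rfl, hprincipal H.symm h3⟩

theorem stmt8 (k A : Type*) [Field k] [IsAlgClosed k]
    [CommRing A] [Algebra k A] [IsLocalRing A] [IsArtinianRing A]
    (hres : Function.Bijective (algebraMap k (IsLocalRing.ResidueField A)))
    (hGor : Module.finrank k (Submodule.restrictScalars k (socle A)) = 1)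
    (n e : ℕ) (hn : 2 ≤ n) (he : 3 ≤ e)
    (hchar : ∀ p : ℕ, CharP k p → p = 0 ∨ e < p)
    (hH0 : hilbFn k (IsLocalRing.maximalIdeal A) 0 = 1)
    (hH1 : hilbFn k (IsLocalRing.maximalIdeal A) 1 = n)
    (hH2 : hilbFn k (IsLocalRing.maximalIdeal A) 2 = 2)
    (hHi : ∀ i : ℕ, 3 ≤ i → i ≤ e → hilbFn k (IsLocalRing.maximalIdeal A) i = 1)
    (hlev : IsLocalRing.maximalIdeal A ^ e ≠ ⊥)
    (hlev' : IsLocalRing.maximalIdeal A ^ (e + 1) = ⊥)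
    (a₁ a₂ : A) (ha₁ : a₁ ∈ IsLocalRing.maximalIdeal A) (ha₂ : a₂ ∈ IsLocalRing.maximalIdeal A)
    (hsq : IsLocalRing.maximalIdeal A ^ 2 =
      Ideal.span {a₁ ^ 2, a₂ ^ 2} ⊔ IsLocalRing.maximalIdeal A ^ 3)
    (hprod : a₁ * a₂ ∈ IsLocalRing.maximalIdeal A ^ 3) :
    (∀ h : ℕ, 2 ≤ h → IsLocalRing.maximalIdeal A ^ h =
      Ideal.span {a₁ ^ h, a₂ ^ h} ⊔ IsLocalRing.maximalIdeal A ^ (h + 1)) ∧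
    ∃ b₁ b₂ : A, ((b₁, b₂) = (a₁, a₂) ∨ (b₁, b₂) = (a₂, a₁)) ∧
      b₁ ^ e ≠ 0 ∧
      ∀ h : ℕ, 3 ≤ h → IsLocalRing.maximalIdeal A ^ h = Ideal.span {b₁ ^ h} :=
  stmt8_general k A e he hHi hlev hlev' a₁ a₂ ha₁ ha₂ hsq hprod
end

section
/- The map (a₂, a₃) ↦ (−a₂, i·a₃), where i² = −1, defines a k-algebra automorphism of k[x₁,x₂,x₃] carrying the ideal (x₁x₂ + x₃², x₁x₃, x₂² − αx₃² + x₁²) onto (x₁x₂ + x₃², x₁x₃, x₂² + αx₃² + x₁²); hence the algebras A^{1,α²}_{n,3,n+5} with parameters α and −α are isomorphic. -/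
/-!
The substitution x₂ ↦ -x₂, x₃ ↦ i x₃ multiplies the generators x₁x₂ + x₃² and x₁x₃ by the
units -1 and i, and since i² = -1 it turns x₂² - αx₃² + x₁² into x₂² + αx₃² + x₁².
-/

open MvPolynomial

namespace MvPolynomial

variable {σ R : Type*} [CommSemiring R]

noncomputable def scaleVars (u : σ → Rˣ) : MvPolynomial σ R ≃ₐ[R] MvPolynomial σ R :=
  AlgEquiv.ofAlgHom (aeval fun j => C (u j : R) * X j) (aeval fun j => C (↑(u j)⁻¹ : R) * X j)
    (algHom_ext fun j => by simp [← mul_assoc, ← C_mul])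
    (algHom_ext fun j => by simp [← mul_assoc, ← C_mul])

@[simp]
theorem scaleVars_X (u : σ → Rˣ) (j : σ) : scaleVars u (X j) = C (u j : R) * X j :=
  aeval_X _ _

@[simp]
theorem scaleVars_C (u : σ → Rˣ) (r : R) : scaleVars u (C r) = C r :=
  aeval_C _ _

end MvPolynomial

section SignFlip

variable {R : Type*} [CommRing R] {i : R}

def unitOfSqEqNegOne (hi : i ^ 2 = -1) : Rˣ :=
  ⟨i, -i, by linear_combination -hi, by linear_combination -hi⟩

noncomputable def signFlip (hi : i ^ 2 = -1) :
    MvPolynomial (Fin 3) R ≃ₐ[R] MvPolynomial (Fin 3) R :=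
  scaleVars ![1, -1, unitOfSqEqNegOne hi]

@[simp] theorem signFlip_X_zero (hi : i ^ 2 = -1) : signFlip hi (X 0) = X 0 := by
  simp [signFlip]

@[simp] theorem signFlip_X_one (hi : i ^ 2 = -1) : signFlip hi (X 1) = -X 1 := by
  simp [signFlip]

@[simp] theorem signFlip_X_two (hi : i ^ 2 = -1) : signFlip hi (X 2) = C i * X 2 := by
  simp [signFlip, unitOfSqEqNegOne]

@[simp] theorem signFlip_C (hi : i ^ 2 = -1) (r : R) : signFlip hi (C r) = C r :=
  scaleVars_C _ r

noncomputable def definingIdeal (α : R) : Ideal (MvPolynomial (Fin 3) R) :=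
  Ideal.span {X 0 * X 1 + X 2 ^ 2, X 0 * X 2, X 1 ^ 2 - C α * X 2 ^ 2 + X 0 ^ 2}

theorem map_signFlip_definingIdeal (hi : i ^ 2 = -1) (α : R) :
    Ideal.map (signFlip hi : MvPolynomial (Fin 3) R →+* MvPolynomial (Fin 3) R)
      (definingIdeal α) = definingIdeal (-α) := by
  have hCi : (C i : MvPolynomial (Fin 3) R) ^ 2 = -1 := by rw [← C_pow, hi, C_neg, C_1]
  have e₁ : signFlip hi (X 0 * X 1 + X 2 ^ 2) = -(X 0 * X 1 + X 2 ^ 2) := by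
    simp only [map_add, map_mul, map_pow, signFlip_X_zero, signFlip_X_one, signFlip_X_two]
    linear_combination X 2 ^ 2 * hCi
  have e₂ : signFlip hi (X 0 * X 2) = C i * (X 0 * X 2) := by
    simp only [map_mul, signFlip_X_zero, signFlip_X_two]; ring
  have e₃ : signFlip hi (X 1 ^ 2 - C α * X 2 ^ 2 + X 0 ^ 2) =
      X 1 ^ 2 - C (-α) * X 2 ^ 2 + X 0 ^ 2 := by
    simp only [map_add, map_sub, map_mul, map_pow, signFlip_X_zero, signFlip_X_one,
      signFlip_X_two, signFlip_C, C_neg]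
    linear_combination -(C α * X 2 ^ 2) * hCi
  have hunit : IsUnit (C i : MvPolynomial (Fin 3) R) := (unitOfSqEqNegOne hi).isUnit.map C
  rw [definingIdeal, definingIdeal, Ideal.map_span, Set.image_insert_eq, Set.image_insert_eq,
    Set.image_singleton]
  simp only [RingHom.coe_coe, e₁, e₂, e₃]
  rw [Ideal.span_insert, Ideal.span_insert, Ideal.span_singleton_neg,
    Ideal.span_singleton_mul_left_unit hunit, ← Ideal.span_insert, ← Ideal.span_insert]

end SignFlip

theorem stmt11_general (k : Type*) [Field k]
    (i : k) (hi : i ^ 2 = -1) (α : k) :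
    ∃ φ : MvPolynomial (Fin 3) k ≃ₐ[k] MvPolynomial (Fin 3) k,
      φ (X 0) = X 0 ∧ φ (X 1) = -X 1 ∧ φ (X 2) = C i * X 2 ∧
      Ideal.map (φ : MvPolynomial (Fin 3) k →+* MvPolynomial (Fin 3) k)
        (Ideal.span {X 0 * X 1 + X 2 ^ 2, X 0 * X 2,
          X 1 ^ 2 - C α * X 2 ^ 2 + X 0 ^ 2}) =
        Ideal.span {X 0 * X 1 + X 2 ^ 2, X 0 * X 2,
          X 1 ^ 2 + C α * X 2 ^ 2 + X 0 ^ 2} ∧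
      Nonempty
        ((MvPolynomial (Fin 3) k ⧸
            (Ideal.span {X 0 * X 1 + X 2 ^ 2, X 0 * X 2,
              X 1 ^ 2 - C α * X 2 ^ 2 + X 0 ^ 2} : Ideal (MvPolynomial (Fin 3) k))) ≃ₐ[k]
          (MvPolynomial (Fin 3) k ⧸
            (Ideal.span {X 0 * X 1 + X 2 ^ 2, X 0 * X 2,
              X 1 ^ 2 - C (-α) * X 2 ^ 2 + X 0 ^ 2} : Ideal (MvPolynomial (Fin 3) k)))) := by
  have hmap := map_signFlip_definingIdeal hi α
  have hneg : definingIdeal (-α) = Ideal.span {X 0 * X 1 + X 2 ^ 2, X 0 * X 2,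
      X 1 ^ 2 + C α * X 2 ^ 2 + X 0 ^ 2} := by
    simp only [definingIdeal, C_neg, neg_mul, sub_neg_eq_add]
  exact ⟨signFlip hi, signFlip_X_zero hi, signFlip_X_one hi, signFlip_X_two hi, hmap.trans hneg,
    ⟨Ideal.quotientEquivAlg _ _ (signFlip hi) hmap.symm⟩⟩

theorem stmt11 (k : Type*) [Field k] [IsAlgClosed k]
    (h2 : (2 : k) ≠ 0) (h3 : (3 : k) ≠ 0)
    (i : k) (hi : i ^ 2 = -1) (α : k) :
    ∃ φ : MvPolynomial (Fin 3) k ≃ₐ[k] MvPolynomial (Fin 3) k,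
      φ (X 0) = X 0 ∧ φ (X 1) = -X 1 ∧ φ (X 2) = C i * X 2 ∧
      Ideal.map (φ : MvPolynomial (Fin 3) k →+* MvPolynomial (Fin 3) k)
        (Ideal.span {X 0 * X 1 + X 2 ^ 2, X 0 * X 2,
          X 1 ^ 2 - C α * X 2 ^ 2 + X 0 ^ 2}) =
        Ideal.span {X 0 * X 1 + X 2 ^ 2, X 0 * X 2,
          X 1 ^ 2 + C α * X 2 ^ 2 + X 0 ^ 2} ∧
      Nonempty
        ((MvPolynomial (Fin 3) k ⧸
            (Ideal.span {X 0 * X 1 + X 2 ^ 2, X 0 * X 2,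
              X 1 ^ 2 - C α * X 2 ^ 2 + X 0 ^ 2} : Ideal (MvPolynomial (Fin 3) k))) ≃ₐ[k]
          (MvPolynomial (Fin 3) k ⧸
            (Ideal.span {X 0 * X 1 + X 2 ^ 2, X 0 * X 2,
              X 1 ^ 2 - C (-α) * X 2 ^ 2 + X 0 ^ 2} : Ideal (MvPolynomial (Fin 3) k)))) :=
  stmt11_general k i hi α
end
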